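/- Let D be a (2,2) digraph whose CCE graph G contains a cycle C of length m ≥ 3. Then |N⁺(C) ∪ N⁻(C)| ≥ m + 3 and |N⁺(C) ∩ N⁻(C)| ≤ m − 3, where N⁺(C) (resp. N⁻(C)) is the set of vertices outside C that are out-neighbors (resp. in-neighbors) in D of some vertex of C. -/

import Mathlib

open SimpleGraph

/-- A simple digraph given by its arc relation `A` has no loops, and every vertex has
outdegree at most 2 and indegree at most 2. -/
def IsTwoTwo {V : Type*} (A : V → V → Prop) : Prop :=
  (∀ v, ¬ A v v) ∧
  (∀ v a b c, A v a → A v b → A v c → a = b ∨ a = c ∨ b = c) ∧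
  (∀ v a b c, A a v → A b v → A c v → a = b ∨ a = c ∨ b = c)

/-- The competition-common enemy graph of a digraph with arc relation `A`. -/
def CCE {V : Type*} (A : V → V → Prop) : SimpleGraph V where
  Adj u v := u ≠ v ∧ (∃ x, A u x ∧ A v x) ∧ (∃ y, A y u ∧ A y v)
  symm := by
    refine ⟨?_⟩
    rintro u v ⟨h, ⟨x, hx1, hx2⟩, ⟨y, hy1, hy2⟩⟩
    exact ⟨h.symm, ⟨x, hx2, hx1⟩, ⟨y, hy2, hy1⟩⟩
  loopless := ⟨fun v h => h.1 rfl⟩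

/-- The connected component `c` of `G` induces a (finite) path graph. -/
def IsPathComponent {V : Type*} (G : SimpleGraph V) (c : G.ConnectedComponent) : Prop :=
  ∃ n : ℕ, Nonempty ((G.induce c.supp) ≃g pathGraph n)

/-- The connected component `c` of `G` induces a cycle of length at least 3. -/
def IsCycleComponent {V : Type*} (G : SimpleGraph V) (c : G.ConnectedComponent) : Prop :=
  ∃ n : ℕ, 3 ≤ n ∧ Nonempty ((G.induce c.supp) ≃g cycleGraph n)

/-- `G` is the CCE graph of some `⟨2,2⟩` digraph. -/
def IsTwoTwoCCE {V : Type*} (G : SimpleGraph V) : Prop :=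
  ∃ (W : Type) (A : W → W → Prop), IsTwoTwo A ∧ Nonempty (G ≃g CCE A)

/-- `A` is acyclic: it has no directed cycle. -/
def DigraphAcyclic {V : Type*} (A : V → V → Prop) : Prop :=
  ∀ v, ¬ Relation.TransGen A v v

/-- A `(2,2)` digraph: an acyclic `⟨2,2⟩` digraph. -/
def IsTwoTwoAcyclic {V : Type*} (A : V → V → Prop) : Prop :=
  IsTwoTwo A ∧ DigraphAcyclic A

/-- `G` is an interval graph. -/
def IsIntervalGraph {V : Type*} (G : SimpleGraph V) : Prop :=
  ∃ f : V → Set ℝ, (∀ v, ∃ a b : ℝ, f v = Set.Icc a b) ∧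
    ∀ u v, u ≠ v → (G.Adj u v ↔ (f u ∩ f v).Nonempty)

/-- `A` is a minimal `(2,2)` digraph realizing its CCE graph: no proper subdigraph on the
same vertex set has the same CCE graph. -/
def MinimalTwoTwoAcyclic {V : Type*} (A : V → V → Prop) : Prop :=
  IsTwoTwoAcyclic A ∧
    ∀ A' : V → V → Prop, (∀ u v, A' u v → A u v) → CCE A' = CCE A → ∀ u v, A u v → A' u v

/-!
Write the cycle as `f : ZMod m → V` and let `x k`, `y k` be a common out- and in-neighbour of
`f k` and `f (k + 1)`. The degree bounds make `x` injective and force the out-neighbours of `f k`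
to be exactly `x (k - 1)` and `x k`. No `x k` lies on the cycle: if some cycle vertex `f l` has
an in-neighbour on the cycle, then so does `f (l - 1)`, hence every cycle vertex does, which
acyclicity forbids at a minimal one. Thus `N⁺(C)` is the `m`-set `{x k}` and dually `N⁻(C)` is
`{y k}`. A vertex `x i = y j` of `N⁺(C) ∩ N⁻(C)` puts both `f j` and `f (j + 1)` above the two
distinct vertices `f i`, `f (i + 1)`, so the cycle edge `{j, j + 1}` avoids the two lowest cycle
vertices; at most `m - 3` edges do. Inclusion–exclusion gives the bound on the union.
-/

open Function Set Relation

namespace ZMod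

variable {m : ℕ}

lemma natCast_ne_zero_of_lt {n : ℕ} (hn : n ≠ 0) (hnm : n < m) : (n : ZMod m) ≠ 0 := by
  rw [Ne, natCast_eq_zero_iff]
  exact fun h => (Nat.le_of_dvd (Nat.pos_of_ne_zero hn) h).not_gt hnm

lemma add_one_ne_self (hm : 1 < m) (k : ZMod m) : k + 1 ≠ k := by
  intro h
  exact natCast_ne_zero_of_lt one_ne_zero hm (by simpa using h)

lemma forall_of_sub_one [NeZero m] {P : ZMod m → Prop} (h : ∀ k, P k → P (k - 1)) {k₀ : ZMod m}
    (h₀ : P k₀) (k : ZMod m) : P k := by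
  have key : ∀ n : ℕ, P (k₀ - n) := by
    intro n
    induction n with
    | zero => simpa using h₀
    | succ n ih => simpa [sub_sub] using h _ ih
  simpa using key (k₀ - k).val

lemma card_le_sub_three (hm : 3 ≤ m) {a b : ZMod m} (hab : a ≠ b) {S : Finset (ZMod m)}
    (hS : ∀ j ∈ S, j ≠ a ∧ j ≠ b ∧ j + 1 ≠ a ∧ j + 1 ≠ b) : S.card ≤ m - 3 := by
  have : NeZero m := ⟨by omega⟩
  have h1 : (1 : ZMod m) ≠ 0 := by exact_mod_cast natCast_ne_zero_of_lt one_ne_zero (by omega)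
  have h2 : (2 : ZMod m) ≠ 0 := by exact_mod_cast natCast_ne_zero_of_lt two_ne_zero (by omega)
  -- a third index `c` that is excluded too, because `c + 1 ∈ {a, b}`
  obtain ⟨c, hca, hcb, hc⟩ : ∃ c, c ≠ a ∧ c ≠ b ∧ (c + 1 = a ∨ c + 1 = b) := by
    by_cases hba : b = a - 1
    · refine ⟨b - 1, fun h => h2 ?_, fun h => h1 ?_, Or.inr (sub_add_cancel b 1)⟩
      · linear_combination hba - h
      · linear_combination -h
    · exact ⟨a - 1, fun h => h1 (by linear_combination -h), Ne.symm hba,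
        Or.inl (sub_add_cancel a 1)⟩
  have hsub : S ⊆ Finset.univ \ {a, b, c} := by
    intro j hj
    obtain ⟨hja, hjb, hja', hjb'⟩ := hS j hj
    have hjc : j ≠ c := by rintro rfl; tauto
    simp [hja, hjb, hjc]
  calc S.card ≤ (Finset.univ \ {a, b, c}).card := Finset.card_le_card hsub
    _ = m - 3 := by
      rw [Finset.card_univ_sdiff, ZMod.card,
        Finset.card_insert_of_notMem (by simp [hab, hca.symm]), Finset.card_pair hcb.symm]

end ZMod

namespace SimpleGraph.Walk

variable {V : Type*} {G : SimpleGraph V} {v : V}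

lemma getVert_val_add_one (c : G.Walk v v) [NeZero c.length] (k : ZMod c.length) :
    c.getVert (k + 1).val = c.getVert (k.val + 1) := by
  have hval : (k + 1).val = (k.val + 1) % c.length := by
    rw [← ZMod.val_natCast, Nat.cast_add, ZMod.natCast_zmod_val, Nat.cast_one]
  have hk : k.val + 1 ≤ c.length := ZMod.val_lt k
  rcases hk.lt_or_eq with hk | hk
  · rw [hval, Nat.mod_eq_of_lt hk]
  · rw [hval, hk, Nat.mod_self, c.getVert_zero, c.getVert_length]

lemma IsCycle.exists_zmod_parametrization {c : G.Walk v v} (hc : c.IsCycle) :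
    ∃ f : ZMod c.length → V, Function.Injective f ∧ (∀ k, G.Adj (f k) (f (k + 1))) ∧
      ∀ w, w ∈ c.support ↔ w ∈ Set.range f := by
  have : NeZero c.length := ⟨by have := hc.three_le_length; omega⟩
  refine ⟨fun k => c.getVert k.val, fun k l hkl => ?_, fun k => ?_, ?_⟩
  · exact ZMod.val_injective _ (hc.getVert_injOn'
      (by simpa using Nat.le_sub_one_of_lt (ZMod.val_lt k))
      (by simpa using Nat.le_sub_one_of_lt (ZMod.val_lt l)) hkl)
  · simpa [getVert_val_add_one] using c.adj_getVert_succ (ZMod.val_lt k)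
  · intro w
    simp only [mem_support_iff_exists_getVert, Set.mem_range]
    constructor
    · rintro ⟨n, rfl, hn⟩
      rcases hn.lt_or_eq with hn | rfl
      · exact ⟨n, by rw [ZMod.val_natCast_of_lt hn]⟩
      · exact ⟨0, by simp⟩
    · rintro ⟨k, rfl⟩
      exact ⟨k.val, rfl, (ZMod.val_lt k).le⟩

end SimpleGraph.Walk

/-- The paper's `N⁺(s)`; its `N⁻(s)` is `outNbhd (flip A) s`. -/
def outNbhd {V : Type*} (A : V → V → Prop) (s : Set V) : Set V :=
  {w | w ∉ s ∧ ∃ x ∈ s, A x w}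

section Digraph

variable {V : Type*} {A : V → V → Prop}

lemma IsTwoTwo.flip (h : IsTwoTwo A) : IsTwoTwo (flip A) := ⟨h.1, h.2.2, h.2.1⟩

lemma DigraphAcyclic.flip (h : DigraphAcyclic A) : DigraphAcyclic (flip A) :=
  fun v hv => h v (transGen_swap.1 hv)

lemma IsTwoTwoAcyclic.flip (h : IsTwoTwoAcyclic A) : IsTwoTwoAcyclic (flip A) :=
  ⟨h.1.flip, h.2.flip⟩

lemma CCE_flip (A : V → V → Prop) : CCE (flip A) = CCE A := by
  ext u v
  exact and_congr_right fun _ => and_comm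

lemma DigraphAcyclic.wellFounded_transGen [Finite V] (h : DigraphAcyclic A) :
    WellFounded (TransGen A) :=
  have : Std.Irrefl (TransGen A) := ⟨h⟩
  Finite.wellFounded_of_trans_of_irrefl _

end Digraph

lemma WellFounded.exists_pair_forall_ne_of_rel_of_rel {ι V : Type*} [Nontrivial ι]
    {R : V → V → Prop} (hR : WellFounded R) {f : ι → V} (hf : Injective f) :
    ∃ a b : ι, a ≠ b ∧ ∀ j i i', i ≠ i' → R (f i) (f j) → R (f i') (f j) → j ≠ a ∧ j ≠ b := by
  obtain ⟨_, ⟨a, rfl⟩, ha⟩ := hR.has_min (range f) (range_nonempty f)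
  obtain ⟨a', ha'⟩ := exists_ne a
  obtain ⟨_, ⟨⟨b, rfl⟩, hba⟩, hb⟩ :=
    hR.has_min (range f \ {f a}) ⟨f a', ⟨a', rfl⟩, hf.ne ha'⟩
  refine ⟨a, b, fun h => hba (h ▸ rfl), fun j i i' hii' hi hi' => ⟨?_, ?_⟩⟩
  · rintro rfl
    exact ha _ ⟨i, rfl⟩ hi
  · rintro rfl
    by_cases hia : i = a
    · exact hb _ ⟨⟨i', rfl⟩, hf.ne (hia ▸ hii'.symm)⟩ hi'
    · exact hb _ ⟨⟨i, rfl⟩, hf.ne hia⟩ hi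

section CCECycle

variable {V : Type*} {A : V → V → Prop} {m : ℕ} {f x y : ZMod m → V}

lemma injective_of_commonOut (hA : IsTwoTwo A) (hm : 3 ≤ m) (hf : Injective f)
    (hx : ∀ k, A (f k) (x k) ∧ A (f (k + 1)) (x k)) : Injective x := by
  have hin : ∀ k l, A (f l) (x k) → l = k ∨ l = k + 1 := by
    intro k l hl
    rcases hA.2.2 (x k) (f k) (f (k + 1)) (f l) (hx k).1 (hx k).2 hl with h | h | h
    · exact absurd (hf h).symm (ZMod.add_one_ne_self (by omega) k)
    · exact .inl (hf h).symm
    · exact .inr (hf h).symm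
  intro k l hkl
  rcases hin k l (hkl ▸ (hx l).1) with rfl | rfl
  · rfl
  · rcases hin k (k + 1 + 1) (hkl ▸ (hx (k + 1)).2) with h | h
    · exact absurd (by linear_combination h) (ZMod.natCast_ne_zero_of_lt (m := m) two_ne_zero hm)
    · exact absurd h (ZMod.add_one_ne_self (by omega) (k + 1))

lemma eq_commonOut_of_rel (hA : IsTwoTwo A) (hm : 3 ≤ m) (hf : Injective f)
    (hx : ∀ k, A (f k) (x k) ∧ A (f (k + 1)) (x k)) {k : ZMod m} {w : V} (hw : A (f k) w) :
    w = x (k - 1) ∨ w = x k := by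
  have hx' : A (f k) (x (k - 1)) := by simpa using (hx (k - 1)).2
  rcases hA.2.1 (f k) w (x (k - 1)) (x k) hw hx' (hx k).1 with h | h | h
  · exact .inl h
  · exact .inr h
  · refine absurd (injective_of_commonOut hA hm hf hx h) fun h' => ?_
    exact ZMod.add_one_ne_self (by omega) (k - 1) (by rw [sub_add_cancel, h'])

lemma commonOut_not_mem_range [Finite V] (hA : IsTwoTwoAcyclic A) (hm : 3 ≤ m)
    (hf : Injective f) (hadj : ∀ k, (CCE A).Adj (f k) (f (k + 1)))
    (hx : ∀ k, A (f k) (x k) ∧ A (f (k + 1)) (x k)) (k : ZMod m) : x k ∉ range f := by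
  have : NeZero m := ⟨by omega⟩
  -- If `f l` has an in-neighbour on the cycle, it is some `x i`, whose two in-neighbours
  -- `f i`, `f (i + 1)` exhaust the in-degree; so the common in-neighbour of `f (l - 1)`
  -- and `f l` lies on the cycle too.
  have step : ∀ l, (∃ a, A (f a) (f l)) → ∃ a, A (f a) (f (l - 1)) := by
    rintro l ⟨a, ha⟩
    obtain ⟨i, hi⟩ : ∃ i, f l = x i :=
      (eq_commonOut_of_rel hA.1 hm hf hx ha).elim (⟨_, ·⟩) (⟨_, ·⟩)
    obtain ⟨-, -, z, hz, hz'⟩ := hadj (l - 1)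
    rw [sub_add_cancel] at hz'
    rcases hA.1.2.2 (f l) z (f i) (f (i + 1)) hz' (hi ▸ (hx i).1) (hi ▸ (hx i).2) with h | h | h
    · exact ⟨i, h ▸ hz⟩
    · exact ⟨i + 1, h ▸ hz⟩
    · exact absurd h (hadj i).1
  rintro ⟨l, hl⟩
  have hall := ZMod.forall_of_sub_one step ⟨k, hl ▸ (hx k).1⟩
  obtain ⟨_, ⟨l₀, rfl⟩, hmin⟩ := hA.2.wellFounded_transGen.has_min (range f) (range_nonempty f)
  obtain ⟨a, ha⟩ := hall l₀
  exact hmin _ ⟨a, rfl⟩ (.single ha)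

lemma outNbhd_range_eq [Finite V] (hA : IsTwoTwoAcyclic A) (hm : 3 ≤ m)
    (hf : Injective f) (hadj : ∀ k, (CCE A).Adj (f k) (f (k + 1)))
    (hx : ∀ k, A (f k) (x k) ∧ A (f (k + 1)) (x k)) : outNbhd A (range f) = range x := by
  ext w
  constructor
  · rintro ⟨-, _, ⟨k, rfl⟩, hw⟩
    rcases eq_commonOut_of_rel hA.1 hm hf hx hw with rfl | rfl <;> exact ⟨_, rfl⟩
  · rintro ⟨k, rfl⟩
    exact ⟨commonOut_not_mem_range hA hm hf hadj hx k, f k, ⟨k, rfl⟩, (hx k).1⟩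

lemma ncard_range_inter_le [Finite V] (hA : DigraphAcyclic A) (hm : 3 ≤ m)
    (hf : Injective f) (hyinj : Injective y) (hx : ∀ k, A (f k) (x k) ∧ A (f (k + 1)) (x k))
    (hy : ∀ k, A (y k) (f k) ∧ A (y k) (f (k + 1))) :
    (range x ∩ range y).ncard ≤ m - 3 := by
  classical
  have : NeZero m := ⟨by omega⟩
  have : Nontrivial (ZMod m) := nontrivial_of_ne _ _ (ZMod.add_one_ne_self (by omega) 0)
  -- the two lowest cycle vertices are not above two distinct cycle vertices
  obtain ⟨a, b, hab, hlow⟩ := hA.wellFounded_transGen.exists_pair_forall_ne_of_rel_of_rel hf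
  have hinter : range x ∩ range y = y '' (Finset.univ.filter fun j => y j ∈ range x) := by
    ext w
    simp only [mem_inter_iff, mem_image, Finset.coe_filter, Finset.mem_univ, true_and,
      mem_ofPred_eq]
    constructor
    · rintro ⟨hw, j, rfl⟩
      exact ⟨j, hw, rfl⟩
    · rintro ⟨j, hj, rfl⟩
      exact ⟨hj, j, rfl⟩
  rw [hinter, ncard_image_of_injective _ hyinj, ncard_coe_finset]
  refine ZMod.card_le_sub_three hm hab fun j hj => ?_
  obtain ⟨i, hi⟩ := (Finset.mem_filter.1 hj).2
  have hii : i ≠ i + 1 := (ZMod.add_one_ne_self (by omega) i).symm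
  have above : ∀ l, A (y j) (f l) → l ≠ a ∧ l ≠ b := fun l hl =>
    hlow l i (i + 1) hii (.head (hx i).1 (.single (hi ▸ hl))) (.head (hx i).2 (.single (hi ▸ hl)))
  exact ⟨(above j (hy j).1).1, (above j (hy j).1).2, (above _ (hy j).2).1, (above _ (hy j).2).2⟩

theorem ncard_outNbhd_union_ge_and_inter_le [Finite V]
    (hA : IsTwoTwoAcyclic A) (hm : 3 ≤ m) (hf : Injective f)
    (hadj : ∀ k, (CCE A).Adj (f k) (f (k + 1))) :
    m + 3 ≤ (outNbhd A (range f) ∪ outNbhd (flip A) (range f)).ncard ∧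
      (outNbhd A (range f) ∩ outNbhd (flip A) (range f)).ncard ≤ m - 3 := by
  choose x hx using fun k => (hadj k).2.1
  choose y hy using fun k => (hadj k).2.2
  have hadj' : ∀ k, (CCE (flip A)).Adj (f k) (f (k + 1)) := by rwa [CCE_flip]
  have hxinj := injective_of_commonOut hA.1 hm hf hx
  have hyinj := injective_of_commonOut hA.1.flip hm hf hy
  rw [outNbhd_range_eq hA hm hf hadj hx, outNbhd_range_eq hA.flip hm hf hadj' hy]
  have hinter := ncard_range_inter_le hA.2 hm hf hyinj hx hy
  have hunion := ncard_union_add_ncard_inter (range x) (range y)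
  rw [ncard_range_of_injective hxinj, ncard_range_of_injective hyinj, Nat.card_zmod] at hunion
  omega

end CCECycle

theorem stmt15_general {V : Type} [Fintype V] (A : V → V → Prop) (hA : IsTwoTwoAcyclic A)
    {v : V} (c : (CCE A).Walk v v) (hc : c.IsCycle) (m : ℕ) (hm : c.length = m) :
    m + 3 ≤ ({w | w ∉ c.support ∧ ∃ x ∈ c.support, A x w} ∪
              {w | w ∉ c.support ∧ ∃ x ∈ c.support, A w x}).ncard ∧
    ({w | w ∉ c.support ∧ ∃ x ∈ c.support, A x w} ∩
      {w | w ∉ c.support ∧ ∃ x ∈ c.support, A w x}).ncard ≤ m - 3 := by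
  obtain ⟨f, hf, hadj, hsupp⟩ := hc.exists_zmod_parametrization
  subst hm
  simpa only [outNbhd, flip, hsupp] using
    ncard_outNbhd_union_ge_and_inter_le hA hc.three_le_length hf hadj

theorem stmt15 {V : Type} [Fintype V] (A : V → V → Prop) (hA : IsTwoTwoAcyclic A)
    {v : V} (c : (CCE A).Walk v v) (hc : c.IsCycle) (m : ℕ) (hm : c.length = m)
    (hm3 : 3 ≤ m) :
    m + 3 ≤ ({w | w ∉ c.support ∧ ∃ x ∈ c.support, A x w} ∪
              {w | w ∉ c.support ∧ ∃ x ∈ c.support, A w x}).ncard ∧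
    ({w | w ∉ c.support ∧ ∃ x ∈ c.support, A x w} ∩
      {w | w ∉ c.support ∧ ∃ x ∈ c.support, A w x}).ncard ≤ m - 3 :=
  stmt15_general A hA c hc m hm
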